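/- Splitting of a vertex structure's type induces a splitting of its typing context: if Ω; ∅ ⊢ V : τ and τ ⇝ τ₁ ⋈ τ₂, then there exist Ω₁ and Ω₂ with Ω ⇝ Ω₁ ⋈ Ω₂ such that Ω₁; ∅ ⊢ V : τ₁ and Ω₂; ∅ ⊢ V : τ₂. -/

import Mathlib

/-- Availability annotations -/
inductive Avail : Type
  | avail : Avail
  | unavail : Avail
deriving DecidableEq

/-- Vertex structure (VS) types: single vertex, annotated products,
    type variables, corecursive types. -/
inductive VSTy : Type
  | vert : VSTy
  | prod : VSTy → Avail → VSTy → Avail → VSTy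
  | tvar : ℕ → VSTy
  | corec : ℕ → VSTy → VSTy
deriving DecidableEq

/-- Substitution of a VS type for a type variable (capture-avoiding
    in the sense of not descending under a binder that rebinds `t`). -/
def VSTy.subst (t : ℕ) (σ : VSTy) : VSTy → VSTy
  | .vert => .vert
  | .prod τ₁ a₁ τ₂ a₂ => .prod (VSTy.subst t σ τ₁) a₁ (VSTy.subst t σ τ₂) a₂
  | .tvar s => if s = t then σ else .tvar s
  | .corec s τ => if s = t then .corec s τ else .corec s (VSTy.subst t σ τ)

/-- VS subtyping. -/
inductive SubTy : VSTy → VSTy → Prop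
  | refl (τ : VSTy) : SubTy τ τ
  | trans {τ τ'' τ' : VSTy} : SubTy τ τ'' → SubTy τ'' τ' → SubTy τ τ'
  | prodLeft (τ₁ : VSTy) (a₁ : Avail) (τ₂ : VSTy) (a₂ : Avail) (τ₃ : VSTy) :
      SubTy (.prod τ₁ a₁ τ₂ a₂) (.prod τ₃ .unavail τ₂ a₂)
  | prodRight (τ₁ : VSTy) (a₁ : Avail) (τ₂ : VSTy) (a₂ : Avail) (τ₃ : VSTy) :
      SubTy (.prod τ₁ a₁ τ₂ a₂) (.prod τ₁ a₁ τ₃ .unavail)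
  | prodCong {τ₁ τ₁' τ₂ τ₂' : VSTy} (a₁ a₂ : Avail) :
      SubTy τ₁ τ₁' → SubTy τ₂ τ₂' → SubTy (.prod τ₁ a₁ τ₂ a₂) (.prod τ₁' a₁ τ₂' a₂)
  | corec1 (t : ℕ) (τ : VSTy) : SubTy (.corec t τ) (VSTy.subst t (.corec t τ) τ)
  | corec2 (t : ℕ) (τ : VSTy) : SubTy (VSTy.subst t (.corec t τ) τ) (.corec t τ)

/-- VS type splitting  τ ⇝ τ₁ ⋈ τ₂. -/
inductive VSplit : VSTy → VSTy → VSTy → Prop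
  | prod (τ₁ τ₂ : VSTy) :
      VSplit (.prod τ₁ .avail τ₂ .avail)
            (.prod τ₁ .avail τ₂ .unavail)
            (.prod τ₁ .unavail τ₂ .avail)
  | both {τ₁ τ₁' τ₁'' τ₂ τ₂' τ₂'' : VSTy} :
      VSplit τ₁ τ₁' τ₁'' → VSplit τ₂ τ₂' τ₂'' →
      VSplit (.prod τ₁ .avail τ₂ .avail)
            (.prod τ₁' .avail τ₂' .avail)
            (.prod τ₁'' .avail τ₂'' .avail)
  | left {τ₁ τ₁' τ₁'' : VSTy} (τ₂ : VSTy) (a : Avail) :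
      VSplit τ₁ τ₁' τ₁'' →
      VSplit (.prod τ₁ .avail τ₂ a)
            (.prod τ₁' .avail τ₂ a)
            (.prod τ₁'' .avail τ₂ .unavail)
  | right {τ₂ τ₂' τ₂'' : VSTy} (τ₁ : VSTy) (a : Avail) :
      VSplit τ₂ τ₂' τ₂'' →
      VSplit (.prod τ₁ a τ₂ .avail)
            (.prod τ₁ a τ₂' .avail)
            (.prod τ₁ .unavail τ₂'' .avail)
  | corec {t : ℕ} {τ τ₁ τ₂ : VSTy} :
      VSplit (VSTy.subst t (.corec t τ) τ) τ₁ τ₂ → VSplit (.corec t τ) τ₁ τ₂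
  | sub {τ τ₁ τ₁' τ₂ : VSTy} :
      VSplit τ τ₁' τ₂ → SubTy τ₁' τ₁ → VSplit τ τ₁ τ₂
  | comm {τ τ₁ τ₂ : VSTy} : VSplit τ τ₂ τ₁ → VSplit τ τ₁ τ₂

/-- Names bound in contexts: VS variables or generators. -/
inductive VName : Type
  | var : ℕ → VName
  | gen : ℕ → VName
deriving DecidableEq

/-- A context binds names to VS types. -/
abbrev Ctx := List (VName × VSTy)

/-- Affine context splitting  Ω ⇝ Ω₁ ⋈ Ω₂. -/
inductive CtxSplit : Ctx → Ctx → Ctx → Prop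
  | empty : CtxSplit [] [] []
  | comm {Ω Ω₁ Ω₂ : Ctx} : CtxSplit Ω Ω₂ Ω₁ → CtxSplit Ω Ω₁ Ω₂
  | bind {Ω Ω₁ Ω₂ : Ctx} (x : VName) (τ : VSTy) :
      CtxSplit Ω Ω₁ Ω₂ → CtxSplit ((x, τ) :: Ω) ((x, τ) :: Ω₁) Ω₂
  | typeSplit {Ω Ω₁ Ω₂ : Ctx} {τ τ₁ τ₂ : VSTy} (x : VName) :
      CtxSplit Ω Ω₁ Ω₂ → VSplit τ τ₁ τ₂ →
      CtxSplit ((x, τ) :: Ω) ((x, τ₁) :: Ω₁) ((x, τ₂) :: Ω₂)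

/-- Vertex structures. -/
inductive VS : Type
  | var : ℕ → VS
  | gen : ℕ → VS
  | pair : VS → VS → VS
  | fst : VS → VS
  | snd : VS → VS
deriving DecidableEq

/-- Typing of vertex structures:  Ω; Ψ ⊢ V : τ, with affine context Ω
    and unrestricted context Ψ. -/
inductive HasTy : Ctx → Ctx → VS → VSTy → Prop
  | omegaVar {Ω Ψ : Ctx} {u : ℕ} {τ : VSTy} :
      (VName.var u, τ) ∈ Ω → HasTy Ω Ψ (.var u) τ
  | psiVar {Ω Ψ : Ctx} {u : ℕ} {τ : VSTy} :
      (VName.var u, τ) ∈ Ψ → HasTy Ω Ψ (.var u) τ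
  | omegaGen {Ω Ψ : Ctx} {g : ℕ} {τ : VSTy} :
      (VName.gen g, τ) ∈ Ω → HasTy Ω Ψ (.gen g) τ
  | psiGen {Ω Ψ : Ctx} {g : ℕ} {τ : VSTy} :
      (VName.gen g, τ) ∈ Ψ → HasTy Ω Ψ (.gen g) τ
  | pair {Ω Ω₁ Ω₂ Ψ : Ctx} {V₁ V₂ : VS} {τ₁ τ₂ : VSTy} :
      CtxSplit Ω Ω₁ Ω₂ → HasTy Ω₁ Ψ V₁ τ₁ → HasTy Ω₂ Ψ V₂ τ₂ →
      HasTy Ω Ψ (.pair V₁ V₂) (.prod τ₁ .avail τ₂ .avail)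
  | onlyLeftPair {Ω Ψ Ψ' : Ctx} {V₁ V₂ : VS} {τ₁ τ₂ : VSTy} :
      HasTy Ω Ψ V₁ τ₁ → HasTy [] Ψ' V₂ τ₂ →
      HasTy Ω Ψ (.pair V₁ V₂) (.prod τ₁ .avail τ₂ .unavail)
  | onlyRightPair {Ω Ψ Ψ' : Ctx} {V₁ V₂ : VS} {τ₁ τ₂ : VSTy} :
      HasTy [] Ψ' V₁ τ₁ → HasTy Ω Ψ V₂ τ₂ →
      HasTy Ω Ψ (.pair V₁ V₂) (.prod τ₁ .unavail τ₂ .avail)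
  | fst {Ω Ψ : Ctx} {V : VS} {τ₁ τ₂ : VSTy} {a : Avail} :
      HasTy Ω Ψ V (.prod τ₁ .avail τ₂ a) → HasTy Ω Ψ (.fst V) τ₁
  | snd {Ω Ψ : Ctx} {V : VS} {τ₁ τ₂ : VSTy} {a : Avail} :
      HasTy Ω Ψ V (.prod τ₁ a τ₂ .avail) → HasTy Ω Ψ (.snd V) τ₂
  | sub {Ω Ψ : Ctx} {V : VS} {τ' τ : VSTy} :
      HasTy Ω Ψ V τ' → SubTy τ' τ → HasTy Ω Ψ V τ

/-- Big-step normalization of vertex structures  V ↓ V'. -/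
inductive VNorm : VS → VS → Prop
  | var (u : ℕ) : VNorm (.var u) (.var u)
  | gen (g : ℕ) : VNorm (.gen g) (.gen g)
  | pair {V₁ V₁' V₂ V₂' : VS} :
      VNorm V₁ V₁' → VNorm V₂ V₂' → VNorm (.pair V₁ V₂) (.pair V₁' V₂')
  | fstPair {V V₁ V₂ : VS} : VNorm V (.pair V₁ V₂) → VNorm (.fst V) V₁
  | fstNotPair {V V' : VS} :
      VNorm V V' → (∀ V₁ V₂, V' ≠ .pair V₁ V₂) → VNorm (.fst V) (.fst V')
  | sndPair {V V₁ V₂ : VS} : VNorm V (.pair V₁ V₂) → VNorm (.snd V) V₂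
  | sndNotPair {V V' : VS} :
      VNorm V V' → (∀ V₁ V₂, V' ≠ .pair V₁ V₂) → VNorm (.snd V) (.snd V')

/-- Vertex structure equivalence  Ψ ⊢ V ≡ V' : τ. -/
inductive VSEquiv : Ctx → VS → VS → VSTy → Prop
  | refl {Ψ : Ctx} {V : VS} {τ : VSTy} :
      HasTy [] Ψ V τ → VSEquiv Ψ V V τ
  | comm {Ψ : Ctx} {V V' : VS} {τ : VSTy} :
      VSEquiv Ψ V' V τ → VSEquiv Ψ V V' τ
  | trans {Ψ : Ctx} {V V'' V' : VS} {τ : VSTy} :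
      VSEquiv Ψ V V'' τ → VSEquiv Ψ V'' V' τ → VSEquiv Ψ V V' τ
  | pair {Ψ : Ctx} {V₁ V₁' V₂ V₂' : VS} {τ₁ τ₂ : VSTy} :
      VSEquiv Ψ V₁ V₁' τ₁ → VSEquiv Ψ V₂ V₂' τ₂ →
      VSEquiv Ψ (.pair V₁ V₂) (.pair V₁' V₂') (.prod τ₁ .avail τ₂ .avail)
  | onlyLeftPair {Ψ Ψ' : Ctx} {V₁ V₁' V₂ V₂' : VS} {τ₁ τ₂ : VSTy} :
      VSEquiv Ψ V₁ V₁' τ₁ → VSEquiv Ψ' V₂ V₂' τ₂ →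
      VSEquiv Ψ (.pair V₁ V₂) (.pair V₁' V₂') (.prod τ₁ .avail τ₂ .unavail)
  | onlyRightPair {Ψ Ψ' : Ctx} {V₁ V₁' V₂ V₂' : VS} {τ₁ τ₂ : VSTy} :
      VSEquiv Ψ' V₁ V₁' τ₁ → VSEquiv Ψ V₂ V₂' τ₂ →
      VSEquiv Ψ (.pair V₁ V₂) (.pair V₁' V₂') (.prod τ₁ .unavail τ₂ .avail)
  | fst {Ψ : Ctx} {V V' : VS} {τ₁ τ₂ : VSTy} {a : Avail} :
      VSEquiv Ψ V V' (.prod τ₁ .avail τ₂ a) → VSEquiv Ψ (.fst V) (.fst V') τ₁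
  | snd {Ψ : Ctx} {V V' : VS} {τ₁ τ₂ : VSTy} {a : Avail} :
      VSEquiv Ψ V V' (.prod τ₁ a τ₂ .avail) → VSEquiv Ψ (.snd V) (.snd V') τ₂
  | fstPair {Ψ : Ctx} {V V₁ V₂ : VS} {τ₁ τ₂ : VSTy} {a : Avail} :
      VSEquiv Ψ V (.pair V₁ V₂) (.prod τ₁ .avail τ₂ a) →
      VSEquiv Ψ (.fst V) V₁ τ₁
  | sndPair {Ψ : Ctx} {V V₁ V₂ : VS} {τ₁ τ₂ : VSTy} {a : Avail} :
      VSEquiv Ψ V (.pair V₁ V₂) (.prod τ₁ a τ₂ .avail) →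
      VSEquiv Ψ (.snd V) V₂ τ₂
  | sub {Ψ : Ctx} {V V' : VS} {τ' τ : VSTy} :
      VSEquiv Ψ V V' τ' → SubTy τ' τ → VSEquiv Ψ V V' τ

/-- VNeutral vertex structures: variables, generators, and their projections. -/
inductive VNeutral : VS → Prop
  | var (u : ℕ) : VNeutral (.var u)
  | gen (g : ℕ) : VNeutral (.gen g)
  | fst {V : VS} : VNeutral V → VNeutral (.fst V)
  | snd {V : VS} : VNeutral V → VNeutral (.snd V)

/-- VNormal vertex structures: neutral structures and pairs of normal structures. -/
inductive VNormal : VS → Prop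
  | neutral {V : VS} : VNeutral V → VNormal V
  | pair {V₁ V₂ : VS} : VNormal V₁ → VNormal V₂ → VNormal (.pair V₁ V₂)

/-- Vertex paths: a generator followed by a sequence of projections. -/
inductive IsPath : VS → Prop
  | gen (g : ℕ) : IsPath (.gen g)
  | fst {p : VS} : IsPath p → IsPath (.fst p)
  | snd {p : VS} : IsPath p → IsPath (.snd p)

/-- A context containing only generator bindings. -/
def GenOnly (Ω : Ctx) : Prop := ∀ e ∈ Ω, ∃ g τ, e = (VName.gen g, τ)

/-- Substitution of a vertex structure for a VS variable. -/
def VS.subst (u : ℕ) (W : VS) : VS → VS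
  | .var v => if v = u then W else .var v
  | .gen g => .gen g
  | .pair V₁ V₂ => .pair (VS.subst u W V₁) (VS.subst u W V₂)
  | .fst V => .fst (VS.subst u W V)
  | .snd V => .snd (VS.subst u W V)

/-! Induction on the typing derivation. Subtyping reflects splits, which handles subsumption,
and a variable's binding is split in place. At a pair, the split of the product is distributed
over the context split of the pair; regrouping the resulting four pieces of context needs
associativity of context splitting, hence of type splitting. The asymmetric pair rules type the
unavailable component in an unrestricted context, obtained by moving the whole affine context
there (`HasTy.toPsi`). -/

/-- The rules of `VSplit` other than subsumption and commutativity; `VSplit` is the closure of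
this relation under both (`VSplit.induction_on_step`). -/
inductive SplitStep : VSTy → VSTy → VSTy → Prop
  | prod (τ₁ τ₂ : VSTy) :
      SplitStep (.prod τ₁ .avail τ₂ .avail)
        (.prod τ₁ .avail τ₂ .unavail) (.prod τ₁ .unavail τ₂ .avail)
  | both {τ₁ τ₁' τ₁'' τ₂ τ₂' τ₂'' : VSTy} :
      VSplit τ₁ τ₁' τ₁'' → VSplit τ₂ τ₂' τ₂'' →
      SplitStep (.prod τ₁ .avail τ₂ .avail)
        (.prod τ₁' .avail τ₂' .avail) (.prod τ₁'' .avail τ₂'' .avail)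
  | left {τ₁ τ₁' τ₁'' : VSTy} (τ₂ : VSTy) (a : Avail) :
      VSplit τ₁ τ₁' τ₁'' →
      SplitStep (.prod τ₁ .avail τ₂ a) (.prod τ₁' .avail τ₂ a) (.prod τ₁'' .avail τ₂ .unavail)
  | right {τ₂ τ₂' τ₂'' : VSTy} (τ₁ : VSTy) (a : Avail) :
      VSplit τ₂ τ₂' τ₂'' →
      SplitStep (.prod τ₁ a τ₂ .avail) (.prod τ₁ a τ₂' .avail) (.prod τ₁ .unavail τ₂'' .avail)
  | corec {t : ℕ} {τ τ₁ τ₂ : VSTy} :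
      VSplit (VSTy.subst t (.corec t τ) τ) τ₁ τ₂ → SplitStep (.corec t τ) τ₁ τ₂

namespace VSplit

variable {τ τ' σ₁ σ₂ σ₁' σ₂' : VSTy}

theorem sub_right (h : VSplit τ σ₁ σ₂) (st : SubTy σ₂ σ₂') : VSplit τ σ₁ σ₂' :=
  (h.comm.sub st).comm

theorem mono (h : VSplit τ σ₁ σ₂) (st₁ : SubTy σ₁ σ₁') (st₂ : SubTy σ₂ σ₂') :
    VSplit τ σ₁' σ₂' :=
  (h.sub st₁).sub_right st₂

@[elab_as_elim]
theorem induction_on_step {P : VSTy → VSTy → Prop}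
    (comm : ∀ {σ₁ σ₂}, P σ₂ σ₁ → P σ₁ σ₂)
    (sub : ∀ {σ₁ σ₁' σ₂}, P σ₁' σ₂ → SubTy σ₁' σ₁ → P σ₁ σ₂)
    (step : ∀ {σ₁ σ₂}, SplitStep τ σ₁ σ₂ → P σ₁ σ₂) (h : VSplit τ σ₁ σ₂) : P σ₁ σ₂ := by
  induction h with
  | prod τ₁ τ₂ => exact step (.prod τ₁ τ₂)
  | both h₁ h₂ => exact step (.both h₁ h₂)
  | left τ₂ a h => exact step (.left τ₂ a h)
  | right τ₁ a h => exact step (.right τ₁ a h)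
  | corec h => exact step (.corec h)
  | sub _ st ih => exact sub (ih step) st
  | comm _ ih => exact comm (ih step)

theorem subTy (h : VSplit τ σ₁ σ₂) : SubTy τ σ₁ ∧ SubTy τ σ₂ := by
  induction h with
  | prod τ₁ τ₂ => exact ⟨.prodRight τ₁ .avail τ₂ .avail τ₂, .prodLeft τ₁ .avail τ₂ .avail τ₁⟩
  | both _ _ ih₁ ih₂ => exact ⟨.prodCong _ _ ih₁.1 ih₂.1, .prodCong _ _ ih₁.2 ih₂.2⟩
  | left τ₂ a _ ih =>
      exact ⟨.prodCong _ _ ih.1 (.refl _),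
        .trans (.prodCong _ _ ih.2 (.refl _)) (.prodRight _ .avail τ₂ a τ₂)⟩
  | right τ₁ a _ ih =>
      exact ⟨.prodCong _ _ (.refl _) ih.1,
        .trans (.prodCong _ _ (.refl _) ih.2) (.prodLeft τ₁ a _ .avail τ₁)⟩
  | corec _ ih => exact ⟨.trans (.corec1 _ _) ih.1, .trans (.corec1 _ _) ih.2⟩
  | sub _ st ih => exact ⟨.trans ih.1 st, ih.2⟩
  | comm _ ih => exact ih.symm

theorem of_subTy (hs : VSplit τ σ₁ σ₂) (st : SubTy τ' τ) : VSplit τ' σ₁ σ₂ := by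
  induction st generalizing σ₁ σ₂ with
  | refl => exact hs
  | trans _ _ ih₁ ih₂ => exact ih₁ (ih₂ hs)
  | corec1 => exact .corec hs
  | corec2 =>
      refine hs.induction_on_step .comm .sub ?_
      intro σ₁ σ₂ hstep
      cases hstep with
      | corec h => exact h
  | prodLeft τ₁ a₁ _ _ _ =>
      refine hs.induction_on_step .comm .sub ?_
      intro σ₁ σ₂ hstep
      cases hstep with
      | right _ _ h =>
          exact (right τ₁ a₁ h).mono (.prodLeft _ _ _ _ _) (.prodLeft _ _ _ _ _)
  | prodRight _ _ τ₂ a₂ _ =>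
      refine hs.induction_on_step .comm .sub ?_
      intro σ₁ σ₂ hstep
      cases hstep with
      | left _ _ h =>
          exact (left τ₂ a₂ h).mono (.prodRight _ _ _ _ _) (.prodRight _ _ _ _ _)
  | prodCong _ _ stA stB ihA ihB =>
      refine hs.induction_on_step .comm .sub ?_
      intro σ₁ σ₂ hstep
      cases hstep with
      | prod => exact (prod _ _).mono (.prodCong _ _ stA stB) (.prodCong _ _ stA stB)
      | both hA hB => exact both (ihA hA) (ihB hB)
      | left _ _ hA =>
          exact (left _ _ (ihA hA)).mono (.prodCong _ _ (.refl _) stB) (.prodCong _ _ (.refl _) stB)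
      | right _ _ hB =>
          exact (right _ _ (ihB hB)).mono
            (.prodCong _ _ stA (.refl _)) (.prodCong _ _ stA (.refl _))

end VSplit

/-- `τ ⇝ (σ₁ ⋈ β) ⋈ σ₂`. -/
def NestedSplit (τ σ₁ β σ₂ : VSTy) : Prop := ∃ ρ, VSplit τ ρ σ₂ ∧ VSplit ρ σ₁ β

namespace NestedSplit

variable {τ β σ₁ σ₂ σ' : VSTy}

theorem mono_left (h : NestedSplit τ σ₁ β σ₂) (st : SubTy σ₁ σ') : NestedSplit τ σ' β σ₂ :=
  let ⟨ρ, h₁, h₂⟩ := h; ⟨ρ, h₁, h₂.sub st⟩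

theorem mono_mid (h : NestedSplit τ σ₁ β σ₂) (st : SubTy β σ') : NestedSplit τ σ₁ σ' σ₂ :=
  let ⟨ρ, h₁, h₂⟩ := h; ⟨ρ, h₁, h₂.sub_right st⟩

theorem mono_right (h : NestedSplit τ σ₁ β σ₂) (st : SubTy σ₂ σ') : NestedSplit τ σ₁ β σ' :=
  let ⟨ρ, h₁, h₂⟩ := h; ⟨ρ, h₁.sub_right st, h₂⟩

theorem corec {t : ℕ} (h : NestedSplit (VSTy.subst t (.corec t τ) τ) σ₁ β σ₂) :
    NestedSplit (.corec t τ) σ₁ β σ₂ :=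
  let ⟨ρ, h₁, h₂⟩ := h; ⟨ρ, .corec h₁, h₂⟩

/-- Both orientations are carried along, since a split of `α` may occur in either order. -/
theorem of_vsplit {α : VSTy}
    (step : ∀ {σ₁ σ₂}, SplitStep α σ₁ σ₂ → NestedSplit τ σ₁ β σ₂ ∧ NestedSplit τ σ₂ β σ₁)
    (h : VSplit α σ₁ σ₂) : NestedSplit τ σ₁ β σ₂ :=
  (h.induction_on_step (P := fun σ₁ σ₂ => NestedSplit τ σ₁ β σ₂ ∧ NestedSplit τ σ₂ β σ₁)
    And.symm (fun ⟨h₁, h₂⟩ st => ⟨h₁.mono_left st, h₂.mono_right st⟩) step).1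

end NestedSplit

section Assoc

open VSplit SubTy

variable {A A₁ A₂ B B₁ B₂ σ₁ σ₂ : VSTy}

theorem nestedSplit_prod_fst (h : VSplit (.prod A .avail B .unavail) σ₁ σ₂) :
    NestedSplit (.prod A .avail B .avail) σ₁ (.prod A .unavail B .avail) σ₂ := by
  refine NestedSplit.of_vsplit ?_ h
  intro σ₁ σ₂ hstep
  cases hstep with
  | left _ _ hA =>
      exact ⟨⟨_, left _ .avail hA, (prod _ _).sub_right (prodLeft _ _ _ _ _)⟩,
        ⟨_, left _ .avail hA.comm, (prod _ _).sub_right (prodLeft _ _ _ _ _)⟩⟩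

theorem nestedSplit_prod_snd (h : VSplit (.prod A .unavail B .avail) σ₁ σ₂) :
    NestedSplit (.prod A .avail B .avail) σ₁ (.prod A .avail B .unavail) σ₂ := by
  refine NestedSplit.of_vsplit ?_ h
  intro σ₁ σ₂ hstep
  cases hstep with
  | right _ _ hB =>
      exact ⟨⟨_, right _ .avail hB, (prod _ _).comm.sub_right (prodRight _ _ _ _ _)⟩,
        ⟨_, right _ .avail hB.comm, (prod _ _).comm.sub_right (prodRight _ _ _ _ _)⟩⟩

theorem nestedSplit_both (hA : VSplit A A₁ A₂) (hB : VSplit B B₁ B₂)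
    (ihA : ∀ {σ₁ σ₂}, VSplit A₁ σ₁ σ₂ → NestedSplit A σ₁ A₂ σ₂)
    (ihB : ∀ {σ₁ σ₂}, VSplit B₁ σ₁ σ₂ → NestedSplit B σ₁ B₂ σ₂)
    (h : VSplit (.prod A₁ .avail B₁ .avail) σ₁ σ₂) :
    NestedSplit (.prod A .avail B .avail) σ₁ (.prod A₂ .avail B₂ .avail) σ₂ := by
  refine NestedSplit.of_vsplit ?_ h
  intro σ₁ σ₂ hstep
  cases hstep with
  | prod =>
      exact ⟨⟨_, (right _ .avail hB.comm).sub_right (prodLeft _ _ _ _ _),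
          (left _ .avail hA.comm).comm.sub (prodRight _ _ _ _ _)⟩,
        ⟨_, (left _ .avail hA.comm).sub_right (prodRight _ _ _ _ _),
          (right _ .avail hB.comm).comm.sub (prodLeft _ _ _ _ _)⟩⟩
  | both h₁ h₂ =>
      obtain ⟨_, hA₁, hA₂⟩ := ihA h₁
      obtain ⟨_, hB₁, hB₂⟩ := ihB h₂
      obtain ⟨_, hA₁', hA₂'⟩ := ihA h₁.comm
      obtain ⟨_, hB₁', hB₂'⟩ := ihB h₂.comm
      exact ⟨⟨_, both hA₁ hB₁, both hA₂ hB₂⟩, ⟨_, both hA₁' hB₁', both hA₂' hB₂'⟩⟩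
  | left _ _ h₁ =>
      obtain ⟨_, hA₁, hA₂⟩ := ihA h₁
      obtain ⟨_, hA₁', hA₂'⟩ := ihA h₁.comm
      exact ⟨⟨_, (left _ .avail hA₁).sub_right (prodRight _ _ _ _ _), both hA₂ hB⟩,
        ⟨_, both hA₁' hB.comm, (left _ .avail hA₂'.comm).comm.sub (prodRight _ _ _ _ _)⟩⟩
  | right _ _ h₂ =>
      obtain ⟨_, hB₁, hB₂⟩ := ihB h₂
      obtain ⟨_, hB₁', hB₂'⟩ := ihB h₂.comm
      exact ⟨⟨_, (right _ .avail hB₁).sub_right (prodLeft _ _ _ _ _), both hA hB₂⟩,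
        ⟨_, both hA.comm hB₁', (right _ .avail hB₂'.comm).comm.sub (prodLeft _ _ _ _ _)⟩⟩

theorem nestedSplit_left_fst {a : Avail} (hA : VSplit A A₁ A₂)
    (ihA : ∀ {σ₁ σ₂}, VSplit A₁ σ₁ σ₂ → NestedSplit A σ₁ A₂ σ₂)
    (h : VSplit (.prod A₁ .avail B a) σ₁ σ₂) :
    NestedSplit (.prod A .avail B a) σ₁ (.prod A₂ .avail B .unavail) σ₂ := by
  refine NestedSplit.of_vsplit ?_ h
  intro σ₁ σ₂ hstep
  cases hstep with
  | prod =>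
      exact ⟨⟨_, (prod _ _).sub_right (prodLeft _ _ _ _ _), left _ .unavail hA⟩,
        ⟨_, left _ .avail hA.comm, (prod _ _).comm.sub (prodLeft _ _ _ _ _)⟩⟩
  | both h₁ h₂ =>
      obtain ⟨_, hA₁, hA₂⟩ := ihA h₁
      obtain ⟨_, hA₁', hA₂'⟩ := ihA h₁.comm
      exact ⟨⟨_, both hA₁ h₂, (left _ .avail hA₂).sub_right (prodRight _ _ _ _ _)⟩,
        ⟨_, both hA₁' h₂.comm, (left _ .avail hA₂').sub_right (prodRight _ _ _ _ _)⟩⟩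
  | left _ _ h₁ =>
      obtain ⟨_, hA₁, hA₂⟩ := ihA h₁
      obtain ⟨_, hA₁', hA₂'⟩ := ihA h₁.comm
      exact ⟨⟨_, left _ _ hA₁, left _ _ hA₂⟩,
        ⟨_, (left _ _ hA₁'.comm).comm, left _ .unavail hA₂'⟩⟩
  | right _ _ h₂ =>
      exact ⟨⟨_, (right _ .avail h₂).sub_right (prodLeft _ _ _ _ _),
          (left _ .avail hA).sub_right (prodRight _ _ _ _ _)⟩,
        ⟨_, both hA.comm h₂.comm,
          ((prod _ _).comm.sub (prodLeft _ _ _ _ _)).sub_right (prodRight _ _ _ _ _)⟩⟩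

theorem nestedSplit_left_snd {a : Avail}
    (ihA : ∀ {σ₁ σ₂}, VSplit A₂ σ₁ σ₂ → NestedSplit A σ₁ A₁ σ₂)
    (h : VSplit (.prod A₂ .avail B .unavail) σ₁ σ₂) :
    NestedSplit (.prod A .avail B a) σ₁ (.prod A₁ .avail B a) σ₂ := by
  refine NestedSplit.of_vsplit ?_ h
  intro σ₁ σ₂ hstep
  cases hstep with
  | left _ _ h₁ =>
      obtain ⟨_, hA₁, hA₂⟩ := ihA h₁
      obtain ⟨_, hA₁', hA₂'⟩ := ihA h₁.comm
      exact ⟨⟨_, left _ a hA₁, (left _ a hA₂.comm).comm⟩,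
        ⟨_, left _ a hA₁', (left _ a hA₂'.comm).comm⟩⟩

theorem nestedSplit_right_fst {a : Avail} (hB : VSplit B B₁ B₂)
    (ihB : ∀ {σ₁ σ₂}, VSplit B₁ σ₁ σ₂ → NestedSplit B σ₁ B₂ σ₂)
    (h : VSplit (.prod A a B₁ .avail) σ₁ σ₂) :
    NestedSplit (.prod A a B .avail) σ₁ (.prod A .unavail B₂ .avail) σ₂ := by
  refine NestedSplit.of_vsplit ?_ h
  intro σ₁ σ₂ hstep
  cases hstep with
  | prod =>
      exact ⟨⟨_, right _ .avail hB.comm, (prod _ _).sub (prodRight _ _ _ _ _)⟩,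
        ⟨_, (prod _ _).comm.sub_right (prodRight _ _ _ _ _), right _ .unavail hB⟩⟩
  | both h₁ h₂ =>
      obtain ⟨_, hB₁, hB₂⟩ := ihB h₂
      obtain ⟨_, hB₁', hB₂'⟩ := ihB h₂.comm
      exact ⟨⟨_, both h₁ hB₁, (right _ .avail hB₂).sub_right (prodLeft _ _ _ _ _)⟩,
        ⟨_, both h₁.comm hB₁', (right _ .avail hB₂').sub_right (prodLeft _ _ _ _ _)⟩⟩
  | right _ _ h₂ =>
      obtain ⟨_, hB₁, hB₂⟩ := ihB h₂
      obtain ⟨_, hB₁', hB₂'⟩ := ihB h₂.comm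
      exact ⟨⟨_, right _ _ hB₁, right _ _ hB₂⟩,
        ⟨_, (right _ _ hB₁'.comm).comm, right _ .unavail hB₂'⟩⟩
  | left _ _ h₁ =>
      exact ⟨⟨_, (left _ .avail h₁).sub_right (prodRight _ _ _ _ _),
          (right _ .avail hB).sub_right (prodLeft _ _ _ _ _)⟩,
        ⟨_, both h₁.comm hB.comm,
          ((prod _ _).sub (prodRight _ _ _ _ _)).sub_right (prodLeft _ _ _ _ _)⟩⟩

theorem nestedSplit_right_snd {a : Avail}
    (ihB : ∀ {σ₁ σ₂}, VSplit B₂ σ₁ σ₂ → NestedSplit B σ₁ B₁ σ₂)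
    (h : VSplit (.prod A .unavail B₂ .avail) σ₁ σ₂) :
    NestedSplit (.prod A a B .avail) σ₁ (.prod A a B₁ .avail) σ₂ := by
  refine NestedSplit.of_vsplit ?_ h
  intro σ₁ σ₂ hstep
  cases hstep with
  | right _ _ h₂ =>
      obtain ⟨_, hB₁, hB₂⟩ := ihB h₂
      obtain ⟨_, hB₁', hB₂'⟩ := ihB h₂.comm
      exact ⟨⟨_, right _ a hB₁, (right _ a hB₂.comm).comm⟩,
        ⟨_, right _ a hB₁', (right _ a hB₂'.comm).comm⟩⟩

theorem VSplit.nestedSplit {τ α β : VSTy} (h : VSplit τ α β) :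
    (∀ {σ₁ σ₂}, VSplit α σ₁ σ₂ → NestedSplit τ σ₁ β σ₂) ∧
    (∀ {σ₁ σ₂}, VSplit β σ₁ σ₂ → NestedSplit τ σ₁ α σ₂) := by
  induction h with
  | prod => exact ⟨nestedSplit_prod_fst, nestedSplit_prod_snd⟩
  | both hA hB ihA ihB =>
      exact ⟨nestedSplit_both hA hB ihA.1 ihB.1, nestedSplit_both hA.comm hB.comm ihA.2 ihB.2⟩
  | left _ _ hA ih => exact ⟨nestedSplit_left_fst hA ih.1, nestedSplit_left_snd ih.2⟩
  | right _ _ hB ih => exact ⟨nestedSplit_right_fst hB ih.1, nestedSplit_right_snd ih.2⟩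
  | corec _ ih => exact ⟨fun h => (ih.1 h).corec, fun h => (ih.2 h).corec⟩
  | sub _ st ih => exact ⟨fun h => ih.1 (h.of_subTy st), fun h => (ih.2 h).mono_mid st⟩
  | comm _ ih => exact ih.symm

theorem VSplit.assoc {τ α β : VSTy} (h₁ : VSplit τ α β) (h₂ : VSplit α σ₁ σ₂) :
    NestedSplit τ σ₁ β σ₂ :=
  h₁.nestedSplit.1 h₂

end Assoc

namespace CtxSplit

variable {Ω Ωa Ωb Ω₁ Ω₂ : Ctx}

theorem nil_inv (h : CtxSplit [] Ω₁ Ω₂) : Ω₁ = [] ∧ Ω₂ = [] := by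
  generalize hΩ : ([] : Ctx) = Ω at h
  induction h with
  | empty => exact ⟨rfl, rfl⟩
  | comm _ ih => exact (ih hΩ).symm
  | bind => cases hΩ
  | typeSplit => cases hΩ

theorem cons_inv {x : VName} {τ : VSTy} (h : CtxSplit ((x, τ) :: Ω) Ω₁ Ω₂) :
    (∃ Ω₁', Ω₁ = (x, τ) :: Ω₁' ∧ CtxSplit Ω Ω₁' Ω₂) ∨
    (∃ Ω₂', Ω₂ = (x, τ) :: Ω₂' ∧ CtxSplit Ω Ω₁ Ω₂') ∨
    (∃ τ₁ τ₂ Ω₁' Ω₂', Ω₁ = (x, τ₁) :: Ω₁' ∧ Ω₂ = (x, τ₂) :: Ω₂' ∧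
      VSplit τ τ₁ τ₂ ∧ CtxSplit Ω Ω₁' Ω₂') := by
  generalize hΩ : (x, τ) :: Ω = Ω₀ at h
  induction h with
  | empty => cases hΩ
  | comm _ ih =>
      rcases ih hΩ with ⟨Ω', rfl, h'⟩ | ⟨Ω', rfl, h'⟩ | ⟨τ₁, τ₂, Γ₁, Γ₂, rfl, rfl, hτ, h'⟩
      · exact .inr (.inl ⟨Ω', rfl, h'.comm⟩)
      · exact .inl ⟨Ω', rfl, h'.comm⟩
      · exact .inr (.inr ⟨τ₂, τ₁, Γ₂, Γ₁, rfl, rfl, hτ.comm, h'.comm⟩)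
  | bind _ _ h =>
      cases hΩ
      exact .inl ⟨_, rfl, h⟩
  | typeSplit _ h hτ =>
      cases hΩ
      exact .inr (.inr ⟨_, _, _, _, rfl, rfl, hτ, h⟩)

theorem left_self : ∀ Ω : Ctx, CtxSplit Ω Ω []
  | [] => .empty
  | (x, τ) :: Ω => .bind x τ (left_self Ω)

theorem assoc (hab : CtxSplit Ω Ωa Ωb) (h₁₂ : CtxSplit Ωa Ω₁ Ω₂) :
    ∃ Ωl, CtxSplit Ω Ωl Ω₂ ∧ CtxSplit Ωl Ω₁ Ωb := by
  induction Ω generalizing Ωa Ωb Ω₁ Ω₂ with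
  | nil =>
      obtain ⟨rfl, rfl⟩ := hab.nil_inv
      obtain ⟨rfl, rfl⟩ := h₁₂.nil_inv
      exact ⟨[], .empty, .empty⟩
  | cons p Ω ih =>
      obtain ⟨x, τ⟩ := p
      rcases hab.cons_inv with ⟨Ωa', rfl, hab'⟩ | ⟨Ωb', rfl, hab'⟩ |
        ⟨τa, τb, Ωa', Ωb', rfl, rfl, hτ, hab'⟩
      · rcases h₁₂.cons_inv with ⟨Ω₁', rfl, h₁₂'⟩ | ⟨Ω₂', rfl, h₁₂'⟩ |
          ⟨σ₁, σ₂, Ω₁', Ω₂', rfl, rfl, hσ, h₁₂'⟩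
        · obtain ⟨Ωl, hl, hl'⟩ := ih hab' h₁₂'
          exact ⟨(x, τ) :: Ωl, .bind x τ hl, .bind x τ hl'⟩
        · obtain ⟨Ωl, hl, hl'⟩ := ih hab' h₁₂'
          exact ⟨Ωl, (bind x τ hl.comm).comm, hl'⟩
        · obtain ⟨Ωl, hl, hl'⟩ := ih hab' h₁₂'
          exact ⟨(x, σ₁) :: Ωl, .typeSplit x hl hσ, .bind x σ₁ hl'⟩
      · obtain ⟨Ωl, hl, hl'⟩ := ih hab' h₁₂
        exact ⟨(x, τ) :: Ωl, .bind x τ hl, (bind x τ hl'.comm).comm⟩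
      · rcases h₁₂.cons_inv with ⟨Ω₁', rfl, h₁₂'⟩ | ⟨Ω₂', rfl, h₁₂'⟩ |
          ⟨σ₁, σ₂, Ω₁', Ω₂', rfl, rfl, hσ, h₁₂'⟩
        · obtain ⟨Ωl, hl, hl'⟩ := ih hab' h₁₂'
          exact ⟨(x, τ) :: Ωl, .bind x τ hl, .typeSplit x hl' hτ⟩
        · obtain ⟨Ωl, hl, hl'⟩ := ih hab' h₁₂'
          exact ⟨(x, τb) :: Ωl, .typeSplit x hl hτ.comm, (bind x τb hl'.comm).comm⟩
        · obtain ⟨ρ, hρ, hρ'⟩ := hτ.assoc hσ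
          obtain ⟨Ωl, hl, hl'⟩ := ih hab' h₁₂'
          exact ⟨(x, ρ) :: Ωl, .typeSplit x hl hρ, .typeSplit x hl' hρ'⟩

theorem interchange {Ωa₁ Ωa₂ Ωb₁ Ωb₂ : Ctx} (hab : CtxSplit Ω Ωa Ωb)
    (ha : CtxSplit Ωa Ωa₁ Ωa₂) (hb : CtxSplit Ωb Ωb₁ Ωb₂) :
    ∃ Ωl Ωr, CtxSplit Ω Ωl Ωr ∧ CtxSplit Ωl Ωa₁ Ωb₁ ∧ CtxSplit Ωr Ωa₂ Ωb₂ := by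
  obtain ⟨X, hX, hX'⟩ := hab.comm.assoc hb
  obtain ⟨Y, hY, hY'⟩ := hX'.comm.assoc ha
  obtain ⟨L, hL, hL'⟩ := hX.assoc hY.comm
  exact ⟨Y, L, hL.comm, hY', hL'⟩

theorem of_mem {x : VName} {τ τ₁ τ₂ : VSTy} (hm : (x, τ) ∈ Ω) (hs : VSplit τ τ₁ τ₂) :
    ∃ Ω₁ Ω₂, CtxSplit Ω Ω₁ Ω₂ ∧ (x, τ₁) ∈ Ω₁ ∧ (x, τ₂) ∈ Ω₂ := by
  induction Ω with
  | nil => cases hm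
  | cons p Ω ih =>
      rcases List.mem_cons.1 hm with rfl | hm
      · exact ⟨(x, τ₁) :: Ω, [(x, τ₂)], .typeSplit x (left_self Ω) hs,
          List.mem_cons_self, List.mem_cons_self⟩
      · obtain ⟨Ω₁, Ω₂, h, m₁, m₂⟩ := ih hm
        exact ⟨p :: Ω₁, Ω₂, .bind p.1 p.2 h, List.mem_cons_of_mem _ m₁, m₂⟩

end CtxSplit

def Covers (Ψ Γ : Ctx) : Prop := ∀ p ∈ Γ, ∃ σ, (p.1, σ) ∈ Ψ ∧ SubTy σ p.2

namespace Covers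

variable {Ψ Γ Δ : Ctx}

theorem refl (Γ : Ctx) : Covers Γ Γ := fun p hp => ⟨p.2, hp, .refl _⟩

theorem nil (Ψ : Ctx) : Covers Ψ [] := fun _ hp => absurd hp List.not_mem_nil

theorem trans (h₁ : Covers Ψ Γ) (h₂ : Covers Γ Δ) : Covers Ψ Δ := fun p hp =>
  let ⟨_, hσ, st⟩ := h₂ p hp
  let ⟨σ', hσ', st'⟩ := h₁ _ hσ
  ⟨σ', hσ', st'.trans st⟩

theorem cons_left (h : Covers Ψ Γ) (q : VName × VSTy) : Covers (q :: Ψ) Γ := fun p hp =>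
  let ⟨σ, hσ, st⟩ := h p hp
  ⟨σ, List.mem_cons_of_mem _ hσ, st⟩

theorem cons {x : VName} {τ τ' : VSTy} (h : Covers Ψ Γ) (st : SubTy τ τ') :
    Covers ((x, τ) :: Ψ) ((x, τ') :: Γ) := by
  intro p hp
  rcases List.mem_cons.1 hp with rfl | hp
  · exact ⟨τ, List.mem_cons_self, st⟩
  · exact (h.cons_left _) p hp

end Covers

theorem CtxSplit.covers {Ω Ω₁ Ω₂ : Ctx} (h : CtxSplit Ω Ω₁ Ω₂) :
    Covers Ω Ω₁ ∧ Covers Ω Ω₂ := by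
  induction h with
  | empty => exact ⟨.nil _, .nil _⟩
  | comm _ ih => exact ih.symm
  | bind x τ _ ih => exact ⟨ih.1.cons (.refl τ), ih.2.cons_left _⟩
  | typeSplit _ _ hτ ih => exact ⟨ih.1.cons hτ.subTy.1, ih.2.cons hτ.subTy.2⟩

theorem HasTy.toPsi_of_covers {Ω Ψ Ψ' : Ctx} {V : VS} {τ : VSTy} (h : HasTy Ω Ψ V τ)
    (hΩ : Covers Ψ' Ω) (hΨ : Covers Ψ' Ψ) : HasTy [] Ψ' V τ := by
  induction h with
  | omegaVar hm =>
      obtain ⟨σ, hσ, st⟩ := hΩ _ hm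
      exact .sub (.psiVar hσ) st
  | psiVar hm =>
      obtain ⟨σ, hσ, st⟩ := hΨ _ hm
      exact .sub (.psiVar hσ) st
  | omegaGen hm =>
      obtain ⟨σ, hσ, st⟩ := hΩ _ hm
      exact .sub (.psiGen hσ) st
  | psiGen hm =>
      obtain ⟨σ, hσ, st⟩ := hΨ _ hm
      exact .sub (.psiGen hσ) st
  | pair hsp _ _ ih₁ ih₂ =>
      exact .pair .empty (ih₁ (hΩ.trans hsp.covers.1) hΨ) (ih₂ (hΩ.trans hsp.covers.2) hΨ)
  | onlyLeftPair _ h₂ ih₁ _ => exact .onlyLeftPair (ih₁ hΩ hΨ) h₂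
  | onlyRightPair h₁ _ _ ih₂ => exact .onlyRightPair h₁ (ih₂ hΩ hΨ)
  | fst _ ih => exact .fst (ih hΩ hΨ)
  | snd _ ih => exact .snd (ih hΩ hΨ)
  | sub _ st ih => exact .sub (ih hΩ hΨ) st

theorem HasTy.toPsi {Ω : Ctx} {V : VS} {τ : VSTy} (h : HasTy Ω [] V τ) : HasTy [] Ω V τ :=
  h.toPsi_of_covers (.refl Ω) (.nil Ω)

def TypingSplits (Ω : Ctx) (V : VS) (σ₁ σ₂ : VSTy) : Prop :=
  ∃ Ω₁ Ω₂, CtxSplit Ω Ω₁ Ω₂ ∧ HasTy Ω₁ [] V σ₁ ∧ HasTy Ω₂ [] V σ₂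

namespace TypingSplits

variable {Ω : Ctx} {V V₁ V₂ : VS} {A B τ σ₁ σ₂ : VSTy}

theorem of_vsplit (step : ∀ {σ₁ σ₂}, SplitStep τ σ₁ σ₂ → TypingSplits Ω V σ₁ σ₂)
    (hs : VSplit τ σ₁ σ₂) : TypingSplits Ω V σ₁ σ₂ :=
  hs.induction_on_step
    (fun ⟨Ω₁, Ω₂, h, h₁, h₂⟩ => ⟨Ω₂, Ω₁, h.comm, h₂, h₁⟩)
    (fun ⟨Ω₁, Ω₂, h, h₁, h₂⟩ st => ⟨Ω₁, Ω₂, h, h₁.sub st, h₂⟩) step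

theorem pair {Ωa Ωb : Ctx} (hab : CtxSplit Ω Ωa Ωb)
    (h₁ : HasTy Ωa [] V₁ A) (h₂ : HasTy Ωb [] V₂ B)
    (ih₁ : ∀ {σ₁ σ₂}, VSplit A σ₁ σ₂ → TypingSplits Ωa V₁ σ₁ σ₂)
    (ih₂ : ∀ {σ₁ σ₂}, VSplit B σ₁ σ₂ → TypingSplits Ωb V₂ σ₁ σ₂)
    (hs : VSplit (.prod A .avail B .avail) σ₁ σ₂) : TypingSplits Ω (.pair V₁ V₂) σ₁ σ₂ := by
  refine of_vsplit ?_ hs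
  intro σ₁ σ₂ hstep
  cases hstep with
  | prod => exact ⟨Ωa, Ωb, hab, .onlyLeftPair h₁ h₂.toPsi, .onlyRightPair h₁.toPsi h₂⟩
  | both hA hB =>
      obtain ⟨Γ₁, Γ₂, hΓ, hA₁, hA₂⟩ := ih₁ hA
      obtain ⟨Δ₁, Δ₂, hΔ, hB₁, hB₂⟩ := ih₂ hB
      obtain ⟨Ωl, Ωr, hlr, hl, hr⟩ := hab.interchange hΓ hΔ
      exact ⟨Ωl, Ωr, hlr, .pair hl hA₁ hB₁, .pair hr hA₂ hB₂⟩
  | left _ _ hA =>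
      obtain ⟨Γ₁, Γ₂, hΓ, hA₁, hA₂⟩ := ih₁ hA
      obtain ⟨Ωl, hl, hl'⟩ := hab.assoc hΓ
      exact ⟨Ωl, Γ₂, hl, .pair hl' hA₁ h₂, .onlyLeftPair hA₂ h₂.toPsi⟩
  | right _ _ hB =>
      obtain ⟨Δ₁, Δ₂, hΔ, hB₁, hB₂⟩ := ih₂ hB
      obtain ⟨Ωl, hl, hl'⟩ := hab.comm.assoc hΔ
      exact ⟨Ωl, Δ₂, hl, .pair hl'.comm h₁ hB₁, .onlyRightPair h₁.toPsi hB₂⟩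

theorem onlyLeftPair {Ψ' : Ctx} (h₂ : HasTy [] Ψ' V₂ B)
    (ih₁ : ∀ {σ₁ σ₂}, VSplit A σ₁ σ₂ → TypingSplits Ω V₁ σ₁ σ₂)
    (hs : VSplit (.prod A .avail B .unavail) σ₁ σ₂) : TypingSplits Ω (.pair V₁ V₂) σ₁ σ₂ := by
  refine of_vsplit ?_ hs
  intro σ₁ σ₂ hstep
  cases hstep with
  | left _ _ hA =>
      obtain ⟨Ω₁, Ω₂, h, hA₁, hA₂⟩ := ih₁ hA
      exact ⟨Ω₁, Ω₂, h, .onlyLeftPair hA₁ h₂, .onlyLeftPair hA₂ h₂⟩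

theorem onlyRightPair {Ψ' : Ctx} (h₁ : HasTy [] Ψ' V₁ A)
    (ih₂ : ∀ {σ₁ σ₂}, VSplit B σ₁ σ₂ → TypingSplits Ω V₂ σ₁ σ₂)
    (hs : VSplit (.prod A .unavail B .avail) σ₁ σ₂) : TypingSplits Ω (.pair V₁ V₂) σ₁ σ₂ := by
  refine of_vsplit ?_ hs
  intro σ₁ σ₂ hstep
  cases hstep with
  | right _ _ hB =>
      obtain ⟨Ω₁, Ω₂, h, hB₁, hB₂⟩ := ih₂ hB
      exact ⟨Ω₁, Ω₂, h, .onlyRightPair h₁ hB₁, .onlyRightPair h₁ hB₂⟩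

end TypingSplits

theorem HasTy.typingSplits {Ω Ψ : Ctx} {V : VS} {τ σ₁ σ₂ : VSTy} (h : HasTy Ω Ψ V τ)
    (hΨ : Ψ = []) (hs : VSplit τ σ₁ σ₂) : TypingSplits Ω V σ₁ σ₂ := by
  induction h generalizing σ₁ σ₂ with
  | omegaVar hm =>
      obtain ⟨Ω₁, Ω₂, h, m₁, m₂⟩ := CtxSplit.of_mem hm hs
      exact ⟨Ω₁, Ω₂, h, .omegaVar m₁, .omegaVar m₂⟩
  | omegaGen hm =>
      obtain ⟨Ω₁, Ω₂, h, m₁, m₂⟩ := CtxSplit.of_mem hm hs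
      exact ⟨Ω₁, Ω₂, h, .omegaGen m₁, .omegaGen m₂⟩
  | psiVar hm | psiGen hm => subst hΨ; cases hm
  | pair hab h₁ h₂ ih₁ ih₂ =>
      subst hΨ
      exact .pair hab h₁ h₂ (ih₁ rfl) (ih₂ rfl) hs
  | onlyLeftPair _ h₂ ih₁ _ => exact .onlyLeftPair h₂ (ih₁ hΨ) hs
  | onlyRightPair h₁ _ _ ih₂ => exact .onlyRightPair h₁ (ih₂ hΨ) hs
  | fst _ ih =>
      obtain ⟨Ω₁, Ω₂, h, h₁, h₂⟩ := ih hΨ (.left _ _ hs)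
      exact ⟨Ω₁, Ω₂, h, .fst h₁, .fst h₂⟩
  | snd _ ih =>
      obtain ⟨Ω₁, Ω₂, h, h₁, h₂⟩ := ih hΨ (.right _ _ hs)
      exact ⟨Ω₁, Ω₂, h, .snd h₁, .snd h₂⟩
  | sub _ st ih => exact ih hΨ (hs.of_subTy st)

/-- splitting a VS's type induces a splitting of its context. -/
theorem hasTy_type_split {Ω : Ctx} {V : VS} {τ τ₁ τ₂ : VSTy}
    (h : HasTy Ω [] V τ) (hs : VSplit τ τ₁ τ₂) :
    ∃ Ω₁ Ω₂, CtxSplit Ω Ω₁ Ω₂ ∧ HasTy Ω₁ [] V τ₁ ∧ HasTy Ω₂ [] V τ₂ :=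
  h.typingSplits rfl hs
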